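/- Let $R$ be a simply laced root system, $\varpi_1,\varpi_2$ minuscule weights, $\lambda_i \in W\cdot\varpi_i$, and set $d = d(\lambda_1,\lambda_2) = (\varpi_1,\varpi_2)-(\lambda_1,\lambda_2)$. Then there exists a sequence of roots $\gamma_1,\dots,\gamma_d$ which are pairwise orthogonal and satisfy $(\lambda_1,\gamma_i)(\lambda_2,\gamma_i) < 0$ for all $i$. -/

import Mathlib

open scoped RealInnerProductSpace

variable {E : Type*} [NormedAddCommGroup E] [InnerProductSpace ℝ E]

/-- The reflection in the root `α` (normalized so `(α,α) = 2`): `s_α(x) = x - (x,α) α`. -/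
noncomputable def rootReflection (α x : E) : E := x - ⟪x, α⟫ • α

/-- The Weyl group orbit `W · ϖ` of a weight `ϖ`, where `W` is generated by the reflections
in the roots belonging to `R`. -/
def weylOrbit (R : Set E) (ϖ : E) : Set E :=
  {lam : E | Relation.ReflTransGen (fun μ ν => ∃ α ∈ R, ν = rootReflection α μ) ϖ lam}

/-! Every `μ ∈ W·ϖ` of a dominant minuscule `ϖ` can be written as `μ = ϖ - ∑_{β ∈ S} β` with `S`
pairwise orthogonal roots satisfying `(ϖ, β) = 1`. Such decompositions survive any reflection
`s_α`, by cases on `(ϖ, α)` and `(μ, α)`; the only non-trivial case, `(μ, α) = -1`, either removes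
`α` from `S` or merges the two roots `β₁, β₂ ∈ S` with `(β, α) = 1` into the root `β₁ + β₂ - α`.

For `λ₁ = ϖ₁` and `λ₂ = ϖ₂ - ∑ S`, the roots `β ∈ S` with `(ϖ₁, β) = 1` work: dominance gives
`(ϖ₁, β) ∈ {0, 1}` on `S`, so there are `(ϖ₁, ϖ₂ - λ₂)` of them, and `(λ₂, β) = -1` by
orthogonality. The general case reduces to this one since both the distance and the conclusion
are `W`-invariant. -/

section Reflection

variable {α x y : E}

lemma inner_rootReflection_left (α x y : E) :
    ⟪rootReflection α x, y⟫ = ⟪x, y⟫ - ⟪x, α⟫ * ⟪α, y⟫ := by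
  simp [rootReflection, inner_sub_left, real_inner_smul_left]

lemma inner_rootReflection_right (α x y : E) :
    ⟪x, rootReflection α y⟫ = ⟪x, y⟫ - ⟪y, α⟫ * ⟪x, α⟫ := by
  simp [rootReflection, inner_sub_right, real_inner_smul_right]

lemma inner_rootReflection_comm (α x y : E) :
    ⟪rootReflection α x, y⟫ = ⟪x, rootReflection α y⟫ := by
  rw [inner_rootReflection_left, inner_rootReflection_right, real_inner_comm α y]
  ring

lemma inner_rootReflection_rootReflection (hα : ⟪α, α⟫ = 2) (x y : E) :
    ⟪rootReflection α x, rootReflection α y⟫ = ⟪x, y⟫ := by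
  rw [inner_rootReflection_left, inner_rootReflection_right, inner_rootReflection_right, hα,
    real_inner_comm α y]
  ring

lemma rootReflection_involutive (hα : ⟪α, α⟫ = 2) : Function.Involutive (rootReflection α) :=
  fun x => by
    rw [rootReflection, inner_rootReflection_left, hα, rootReflection]
    module

lemma rootReflection_neg (α x : E) : rootReflection (-α) x = rootReflection α x := by
  simp [rootReflection, inner_neg_right]

lemma rootReflection_of_inner_eq_zero (h : ⟪x, α⟫ = 0) : rootReflection α x = x := by
  rw [rootReflection, h, zero_smul, sub_zero]

lemma rootReflection_of_inner_eq_one (h : ⟪x, α⟫ = 1) : rootReflection α x = x - α := by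
  rw [rootReflection, h, one_smul]

lemma rootReflection_of_inner_eq_neg_one (h : ⟪x, α⟫ = -1) : rootReflection α x = x + α := by
  rw [rootReflection, h]
  module

lemma rootReflection_sum {ι : Type*} (α : E) (s : Finset ι) (f : ι → E) :
    rootReflection α (∑ i ∈ s, f i) = ∑ i ∈ s, rootReflection α (f i) := by
  simp only [rootReflection, sum_inner, Finset.sum_smul, Finset.sum_sub_distrib]

lemma eq_of_inner_eq_two (hx : ⟪x, x⟫ = 2) (hy : ⟪y, y⟫ = 2) (h : ⟪x, y⟫ = 2) : x = y := by
  have : ⟪x - y, x - y⟫ = 0 := by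
    rw [inner_sub_left, inner_sub_right, inner_sub_right, hx, hy, h, real_inner_comm x y, h]
    ring
  exact sub_eq_zero.mp (inner_self_eq_zero.mp this)

end Reflection

section WeylOrbit

variable {R : Set E} {ϖ μ : E}

lemma rootReflection_mem_weylOrbit (h : μ ∈ weylOrbit R ϖ) {α : E} (hα : α ∈ R) :
    rootReflection α μ ∈ weylOrbit R ϖ :=
  Relation.ReflTransGen.tail h ⟨α, hα, rfl⟩

lemma inner_mem_of_mem_weylOrbit (hrefl : ∀ α ∈ R, ∀ β ∈ R, rootReflection α β ∈ R)
    (hmin : ∀ α ∈ R, ⟪ϖ, α⟫ ∈ ({-1, 0, 1} : Set ℝ)) (h : μ ∈ weylOrbit R ϖ) :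
    ∀ α ∈ R, ⟪μ, α⟫ ∈ ({-1, 0, 1} : Set ℝ) := by
  induction h with
  | refl => exact hmin
  | tail _ hstep ih =>
    obtain ⟨β, hβ, rfl⟩ := hstep
    intro α hα
    rw [inner_rootReflection_comm]
    exact ih _ (hrefl β hβ α hα)

end WeylOrbit

lemma Finset.sum_eq_card_filter_of_eq_zero_or_one {ι : Type*} {s : Finset ι} {f : ι → ℝ}
    (hf : ∀ i ∈ s, f i = 0 ∨ f i = 1) : ∑ i ∈ s, f i = (s.filter fun i => f i = 1).card := by
  rw [Finset.natCast_card_filter]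
  refine Finset.sum_congr rfl fun i hi => ?_
  rcases hf i hi with h | h <;> simp [h]

/-- `μ = (∏_{β ∈ S} s_β) ϖ`, the reflections commuting since `S` is orthogonal. -/
structure IsOrthogonalDecomposition (R : Set E) (ϖ μ : E) (S : Finset E) : Prop where
  subset : ↑S ⊆ R
  inner_eq_one : ∀ β ∈ S, ⟪ϖ, β⟫ = 1
  pairwise : (S : Set E).Pairwise fun β γ => ⟪β, γ⟫ = 0
  eq : μ = ϖ - ∑ β ∈ S, β

section Decomposition

variable {R : Set E} {ϖ μ : E} {S : Finset E}

lemma inner_eq_zero_or_one_or_two (hrefl : ∀ α ∈ R, ∀ β ∈ R, rootReflection α β ∈ R)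
    (hmin : ∀ α ∈ R, ⟪ϖ, α⟫ ∈ ({-1, 0, 1} : Set ℝ)) {β δ : E} (hβ : β ∈ R) (hδ : δ ∈ R)
    (hβ1 : ⟪ϖ, β⟫ = 1) (hδ1 : ⟪ϖ, δ⟫ = 1) :
    ⟪β, δ⟫ = 0 ∨ ⟪β, δ⟫ = 1 ∨ ⟪β, δ⟫ = 2 := by
  have h := hmin _ (hrefl β hβ δ hδ)
  rw [inner_rootReflection_right, hβ1, hδ1, real_inner_comm β δ] at h
  simp only [Set.mem_insert_iff, Set.mem_singleton_iff] at h
  rcases h with h | h | h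
  · exact Or.inr (Or.inr (by linarith))
  · exact Or.inr (Or.inl (by linarith))
  · exact Or.inl (by linarith)

namespace IsOrthogonalDecomposition

lemma inner_eq (hS : IsOrthogonalDecomposition R ϖ μ S) (δ : E) :
    ⟪μ, δ⟫ = ⟪ϖ, δ⟫ - ∑ β ∈ S, ⟪β, δ⟫ := by
  rw [hS.eq, inner_sub_left, sum_inner]

lemma inner_eq_neg_one (hS : IsOrthogonalDecomposition R ϖ μ S) (hlen : ∀ α ∈ R, ⟪α, α⟫ = 2)
    {β : E} (hβ : β ∈ S) : ⟪μ, β⟫ = -1 := by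
  have hsum : ∑ γ ∈ S, ⟪γ, β⟫ = ⟪β, β⟫ :=
    Finset.sum_eq_single_of_mem β hβ fun γ hγ hne => hS.pairwise hγ hβ hne
  rw [hS.inner_eq, hsum, hS.inner_eq_one β hβ, hlen β (hS.subset hβ)]
  norm_num

lemma image_rootReflection [DecidableEq E] (hS : IsOrthogonalDecomposition R ϖ μ S)
    (hlen : ∀ α ∈ R, ⟪α, α⟫ = 2) (hrefl : ∀ α ∈ R, ∀ β ∈ R, rootReflection α β ∈ R)
    {α : E} (hα : α ∈ R) (hϖα : ⟪ϖ, α⟫ = 0) :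
    IsOrthogonalDecomposition R ϖ (rootReflection α μ) (S.image (rootReflection α)) := by
  have hinj := (rootReflection_involutive (hlen α hα)).injective
  refine ⟨?_, ?_, ?_, ?_⟩
  · simp only [Finset.coe_image, Set.image_subset_iff]
    exact fun β hβ => hrefl α hα β (hS.subset hβ)
  · simp only [Finset.mem_image, forall_exists_index, and_imp, forall_apply_eq_imp_iff₂]
    intro β hβ
    rw [← inner_rootReflection_comm, rootReflection_of_inner_eq_zero hϖα]
    exact hS.inner_eq_one β hβ
  · rw [Finset.coe_image, hinj.injOn.pairwise_image]
    exact hS.pairwise.mono' fun β γ h => by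
      rwa [Function.onFun, inner_rootReflection_rootReflection (hlen α hα)]
  · rw [Finset.sum_image hinj.injOn, ← rootReflection_sum, hS.eq, rootReflection, inner_sub_left,
      hϖα, rootReflection]
    module

lemma insert_of_inner_eq_one [DecidableEq E] (hS : IsOrthogonalDecomposition R ϖ μ S)
    (hrefl : ∀ α ∈ R, ∀ β ∈ R, rootReflection α β ∈ R)
    (hmin : ∀ α ∈ R, ⟪ϖ, α⟫ ∈ ({-1, 0, 1} : Set ℝ)) {δ : E} (hδ : δ ∈ R)
    (hϖδ : ⟪ϖ, δ⟫ = 1) (hμδ : ⟪μ, δ⟫ = 1) :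
    IsOrthogonalDecomposition R ϖ (μ - δ) (insert δ S) := by
  have hnonneg : ∀ β ∈ S, 0 ≤ ⟪β, δ⟫ := fun β hβ => by
    rcases inner_eq_zero_or_one_or_two hrefl hmin (hS.subset hβ) hδ (hS.inner_eq_one β hβ) hϖδ
      with h | h | h <;> rw [h] <;> norm_num
  have hsum : ∑ β ∈ S, ⟪β, δ⟫ = 0 := by linarith [hS.inner_eq δ]
  have horth : ∀ β ∈ S, ⟪β, δ⟫ = 0 := (Finset.sum_eq_zero_iff_of_nonneg hnonneg).mp hsum
  refine ⟨?_, ?_, ?_, ?_⟩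
  · rw [Finset.coe_insert]
    exact Set.insert_subset hδ hS.subset
  · simpa [hϖδ] using hS.inner_eq_one
  · rw [Finset.coe_insert, Set.pairwise_insert]
    exact ⟨hS.pairwise, fun β hβ _ => ⟨by rw [real_inner_comm]; exact horth β hβ, horth β hβ⟩⟩
  · have hδS : δ ∉ S := fun h => by
      rw [inner_self_eq_zero.mp (horth δ h), inner_zero_right] at hϖδ
      exact zero_ne_one hϖδ
    rw [Finset.sum_insert hδS, hS.eq]
    abel

lemma erase [DecidableEq E] (hS : IsOrthogonalDecomposition R ϖ μ S) {δ : E} (hδ : δ ∈ S) :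
    IsOrthogonalDecomposition R ϖ (μ + δ) (S.erase δ) where
  subset := (Finset.coe_subset.mpr (S.erase_subset δ)).trans hS.subset
  inner_eq_one β hβ := hS.inner_eq_one β (Finset.mem_of_mem_erase hβ)
  pairwise := hS.pairwise.mono (Finset.coe_subset.mpr (S.erase_subset δ))
  eq := by
    rw [hS.eq, ← Finset.add_sum_erase S (fun β => β) hδ]
    abel

lemma insert_sdiff_pair [DecidableEq E] (hS : IsOrthogonalDecomposition R ϖ μ S)
    (hrefl : ∀ α ∈ R, ∀ β ∈ R, rootReflection α β ∈ R) {δ β₁ β₂ : E} (hδ : δ ∈ R)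
    (hϖδ : ⟪ϖ, δ⟫ = 1) (h₁ : β₁ ∈ S) (h₂ : β₂ ∈ S) (hne : β₁ ≠ β₂)
    (hβ₁δ : ⟪β₁, δ⟫ = 1) (hβ₂δ : ⟪β₂, δ⟫ = 1) (horth : ∀ β ∈ S \ {β₁, β₂}, ⟪β, δ⟫ = 0) :
    IsOrthogonalDecomposition R ϖ (μ + δ) (insert (β₁ + β₂ - δ) (S \ {β₁, β₂})) := by
  have h₁₂ : ⟪β₁, β₂⟫ = 0 := hS.pairwise h₁ h₂ hne
  have hmem : β₁ + β₂ - δ ∈ R := by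
    have h := hrefl β₂ (hS.subset h₂) _ (hrefl δ hδ β₁ (hS.subset h₁))
    have h' : ⟪β₁ - δ, β₂⟫ = -1 := by
      rw [inner_sub_left, h₁₂, real_inner_comm, hβ₂δ, zero_sub]
    rwa [rootReflection_of_inner_eq_one hβ₁δ, rootReflection_of_inner_eq_neg_one h',
      sub_add_eq_add_sub] at h
  have hϖ : ⟪ϖ, β₁ + β₂ - δ⟫ = 1 := by
    rw [inner_sub_right, inner_add_right, hS.inner_eq_one β₁ h₁, hS.inner_eq_one β₂ h₂, hϖδ]
    norm_num
  have hsub : S \ {β₁, β₂} ⊆ S := Finset.sdiff_subset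
  have horth' : ∀ β ∈ S \ {β₁, β₂}, ⟪β₁ + β₂ - δ, β⟫ = 0 := fun β hβ => by
    obtain ⟨hβS, hβ₁₂⟩ := Finset.mem_sdiff.mp hβ
    simp only [Finset.mem_insert, Finset.mem_singleton, not_or] at hβ₁₂
    rw [inner_sub_left, inner_add_left, hS.pairwise h₁ hβS (Ne.symm hβ₁₂.1),
      hS.pairwise h₂ hβS (Ne.symm hβ₁₂.2), real_inner_comm, horth β hβ]
    norm_num
  have hnotMem : β₁ + β₂ - δ ∉ S \ {β₁, β₂} := fun h => by
    rw [inner_self_eq_zero.mp (horth' _ h), inner_zero_right] at hϖ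
    exact zero_ne_one hϖ
  refine ⟨?_, ?_, ?_, ?_⟩
  · rw [Finset.coe_insert]
    exact Set.insert_subset hmem ((Finset.coe_subset.mpr hsub).trans hS.subset)
  · exact Finset.forall_mem_insert _ _ _ |>.mpr ⟨hϖ, fun β hβ => hS.inner_eq_one β (hsub hβ)⟩
  · rw [Finset.coe_insert, Set.pairwise_insert]
    exact ⟨hS.pairwise.mono (Finset.coe_subset.mpr hsub), fun β hβ _ =>
      ⟨horth' β hβ, by rw [real_inner_comm]; exact horth' β hβ⟩⟩
  · have hpair : {β₁, β₂} ⊆ S := Finset.insert_subset h₁ (Finset.singleton_subset_iff.mpr h₂)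
    rw [Finset.sum_insert hnotMem, hS.eq, ← Finset.sum_sdiff hpair, Finset.sum_pair hne]
    abel

lemma exists_of_inner_eq_neg_one [DecidableEq E] (hS : IsOrthogonalDecomposition R ϖ μ S)
    (hlen : ∀ α ∈ R, ⟪α, α⟫ = 2) (hrefl : ∀ α ∈ R, ∀ β ∈ R, rootReflection α β ∈ R)
    (hmin : ∀ α ∈ R, ⟪ϖ, α⟫ ∈ ({-1, 0, 1} : Set ℝ)) {δ : E} (hδ : δ ∈ R)
    (hϖδ : ⟪ϖ, δ⟫ = 1) (hμδ : ⟪μ, δ⟫ = -1) :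
    ∃ S', IsOrthogonalDecomposition R ϖ (μ + δ) S' := by
  by_cases hδS : δ ∈ S
  · exact ⟨_, hS.erase hδS⟩
  have hval : ∀ β ∈ S, ⟪β, δ⟫ = 0 ∨ ⟪β, δ⟫ = 1 := fun β hβ => by
    rcases inner_eq_zero_or_one_or_two hrefl hmin (hS.subset hβ) hδ (hS.inner_eq_one β hβ) hϖδ
      with h | h | h
    · exact .inl h
    · exact .inr h
    · exact absurd (eq_of_inner_eq_two (hlen β (hS.subset hβ)) (hlen δ hδ) h ▸ hβ) hδS
  -- `∑ β ∈ S, (β, δ) = (ϖ, δ) - (μ, δ) = 2` with summands in `{0, 1}`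
  have hcard : (S.filter fun β => ⟪β, δ⟫ = 1).card = 2 := by
    have hsum := Finset.sum_eq_card_filter_of_eq_zero_or_one hval
    have hμδ' := hS.inner_eq δ
    exact_mod_cast (by linarith : ((S.filter fun β => ⟪β, δ⟫ = 1).card : ℝ) = 2)
  obtain ⟨β₁, β₂, hne, hpair⟩ := Finset.card_eq_two.mp hcard
  have hfilter : ∀ β, β ∈ S ∧ ⟪β, δ⟫ = 1 ↔ β ∈ ({β₁, β₂} : Finset E) := fun β => by
    rw [← hpair, Finset.mem_filter]
  have h₁ := (hfilter β₁).mpr (by simp)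
  have h₂ := (hfilter β₂).mpr (by simp)
  refine ⟨_, hS.insert_sdiff_pair hrefl hδ hϖδ h₁.1 h₂.1 hne h₁.2 h₂.2 fun β hβ => ?_⟩
  obtain ⟨hβS, hβ₁₂⟩ := Finset.mem_sdiff.mp hβ
  exact (hval β hβS).resolve_right fun h => hβ₁₂ ((hfilter β).mp ⟨hβS, h⟩)

lemma exists_rootReflection (hS : IsOrthogonalDecomposition R ϖ μ S)
    (hlen : ∀ α ∈ R, ⟪α, α⟫ = 2) (hneg : ∀ α ∈ R, -α ∈ R)
    (hrefl : ∀ α ∈ R, ∀ β ∈ R, rootReflection α β ∈ R)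
    (hmin : ∀ α ∈ R, ⟪ϖ, α⟫ ∈ ({-1, 0, 1} : Set ℝ))
    (hμ : ∀ α ∈ R, ⟪μ, α⟫ ∈ ({-1, 0, 1} : Set ℝ)) {α : E} (hα : α ∈ R) :
    ∃ S', IsOrthogonalDecomposition R ϖ (rootReflection α μ) S' := by
  classical
  wlog hϖα : 0 ≤ ⟪ϖ, α⟫ generalizing α
  · rw [← rootReflection_neg]
    exact this (hneg α hα) (by rw [inner_neg_right]; linarith)
  have hϖα' := hmin α hα
  simp only [Set.mem_insert_iff, Set.mem_singleton_iff] at hϖα'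
  rcases hϖα' with h | h | h
  · linarith
  · exact ⟨_, hS.image_rootReflection hlen hrefl hα h⟩
  have hμα := hμ α hα
  simp only [Set.mem_insert_iff, Set.mem_singleton_iff] at hμα
  rcases hμα with h' | h' | h'
  · rw [rootReflection_of_inner_eq_neg_one h']
    exact hS.exists_of_inner_eq_neg_one hlen hrefl hmin hα h h'
  · rw [rootReflection_of_inner_eq_zero h']
    exact ⟨S, hS⟩
  · rw [rootReflection_of_inner_eq_one h']
    exact ⟨_, hS.insert_of_inner_eq_one hrefl hmin hα h h'⟩

end IsOrthogonalDecomposition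

lemma exists_isOrthogonalDecomposition (hlen : ∀ α ∈ R, ⟪α, α⟫ = 2)
    (hneg : ∀ α ∈ R, -α ∈ R) (hrefl : ∀ α ∈ R, ∀ β ∈ R, rootReflection α β ∈ R)
    (hmin : ∀ α ∈ R, ⟪ϖ, α⟫ ∈ ({-1, 0, 1} : Set ℝ)) (h : μ ∈ weylOrbit R ϖ) :
    ∃ S, IsOrthogonalDecomposition R ϖ μ S := by
  induction h with
  | refl => exact ⟨∅, ⟨by simp, by simp, by simp, by simp⟩⟩
  | tail hμ hstep ih =>
    obtain ⟨α, hα, rfl⟩ := hstep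
    obtain ⟨S, hS⟩ := ih
    exact hS.exists_rootReflection hlen hneg hrefl hmin
      (inner_mem_of_mem_weylOrbit hrefl hmin hμ) hα

end Decomposition

lemma inner_nonneg_of_inner_pos {R Rpos : Set E} {ϖ₁ ϖ₂ α : E} (hpos : R = Rpos ∪ (-Rpos))
    (hdom₁ : ∀ α ∈ Rpos, 0 ≤ ⟪ϖ₁, α⟫) (hdom₂ : ∀ α ∈ Rpos, 0 ≤ ⟪ϖ₂, α⟫) (hα : α ∈ R)
    (h₂ : 0 < ⟪ϖ₂, α⟫) : 0 ≤ ⟪ϖ₁, α⟫ := by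
  rw [hpos] at hα
  rcases hα with hα | hα
  · exact hdom₁ α hα
  · have := hdom₂ (-α) hα
    rw [inner_neg_right] at this
    linarith

def HasOrthogonalSeparators (R : Set E) (x y : E) (d : ℕ) : Prop :=
  ∃ γ : Fin d → E, (∀ i, γ i ∈ R) ∧ (∀ i j, i ≠ j → ⟪γ i, γ j⟫ = 0) ∧
    ∀ i, ⟪x, γ i⟫ * ⟪y, γ i⟫ < 0

section Separators

variable {R : Set E} {x y : E} {d : ℕ}

lemma hasOrthogonalSeparators_finset_card {T : Finset E} (hTR : ↑T ⊆ R)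
    (horth : (T : Set E).Pairwise fun β γ => ⟪β, γ⟫ = 0)
    (hsep : ∀ γ ∈ T, ⟪x, γ⟫ * ⟪y, γ⟫ < 0) : HasOrthogonalSeparators R x y T.card :=
  ⟨fun i => T.equivFin.symm i, fun i => hTR (T.equivFin.symm i).2,
    fun i j hij => horth (T.equivFin.symm i).2 (T.equivFin.symm j).2
      (fun h => hij (T.equivFin.symm.injective (Subtype.ext h))),
    fun i => hsep _ (T.equivFin.symm i).2⟩

lemma HasOrthogonalSeparators.reflect (h : HasOrthogonalSeparators R x y d)
    (hlen : ∀ α ∈ R, ⟪α, α⟫ = 2) (hrefl : ∀ α ∈ R, ∀ β ∈ R, rootReflection α β ∈ R)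
    {α : E} (hα : α ∈ R) :
    HasOrthogonalSeparators R (rootReflection α x) (rootReflection α y) d := by
  obtain ⟨γ, hγR, horth, hsep⟩ := h
  have hiso := inner_rootReflection_rootReflection (hlen α hα)
  refine ⟨fun i => rootReflection α (γ i), fun i => hrefl α hα _ (hγR i), ?_, ?_⟩
  · intro i j hij
    rw [hiso]
    exact horth i j hij
  · intro i
    rw [hiso, hiso]
    exact hsep i

end Separators

lemma IsOrthogonalDecomposition.exists_hasOrthogonalSeparators {R Rpos : Set E} {ϖ₁ ϖ₂ μ : E}
    {S : Finset E} (hS : IsOrthogonalDecomposition R ϖ₂ μ S) (hpos : R = Rpos ∪ (-Rpos))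
    (hlen : ∀ α ∈ R, ⟪α, α⟫ = 2)
    (hdom₁ : ∀ α ∈ Rpos, 0 ≤ ⟪ϖ₁, α⟫) (hdom₂ : ∀ α ∈ Rpos, 0 ≤ ⟪ϖ₂, α⟫)
    (hmin₁ : ∀ α ∈ R, ⟪ϖ₁, α⟫ ∈ ({-1, 0, 1} : Set ℝ)) :
    ∃ d : ℕ, (d : ℝ) = ⟪ϖ₁, ϖ₂⟫ - ⟪ϖ₁, μ⟫ ∧ HasOrthogonalSeparators R ϖ₁ μ d := by
  classical
  have hval : ∀ β ∈ S, ⟪ϖ₁, β⟫ = 0 ∨ ⟪ϖ₁, β⟫ = 1 := fun β hβ => by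
    have hnonneg := inner_nonneg_of_inner_pos hpos hdom₁ hdom₂ (hS.subset hβ)
      (by rw [hS.inner_eq_one β hβ]; norm_num)
    have h := hmin₁ β (hS.subset hβ)
    simp only [Set.mem_insert_iff, Set.mem_singleton_iff] at h
    rcases h with h | h | h
    · linarith
    · exact .inl h
    · exact .inr h
  set T := S.filter fun β => ⟪ϖ₁, β⟫ = 1
  refine ⟨T.card, ?_, hasOrthogonalSeparators_finset_card ?_ ?_ ?_⟩
  · rw [← Finset.sum_eq_card_filter_of_eq_zero_or_one hval, hS.eq, inner_sub_right, inner_sum]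
    ring
  · exact (Finset.coe_subset.mpr (S.filter_subset _)).trans hS.subset
  · exact hS.pairwise.mono (Finset.coe_subset.mpr (S.filter_subset _))
  · intro γ hγ
    obtain ⟨hγS, hγ⟩ := Finset.mem_filter.mp hγ
    rw [hγ, hS.inner_eq_neg_one hlen hγS]
    norm_num

lemma exists_hasOrthogonalSeparators {R Rpos : Set E} {ϖ₁ ϖ₂ lam₁ : E}
    (hpos : R = Rpos ∪ (-Rpos)) (hlen : ∀ α ∈ R, ⟪α, α⟫ = 2) (hneg : ∀ α ∈ R, -α ∈ R)
    (hrefl : ∀ α ∈ R, ∀ β ∈ R, rootReflection α β ∈ R)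
    (hdom₁ : ∀ α ∈ Rpos, 0 ≤ ⟪ϖ₁, α⟫) (hdom₂ : ∀ α ∈ Rpos, 0 ≤ ⟪ϖ₂, α⟫)
    (hmin₁ : ∀ α ∈ R, ⟪ϖ₁, α⟫ ∈ ({-1, 0, 1} : Set ℝ))
    (hmin₂ : ∀ α ∈ R, ⟪ϖ₂, α⟫ ∈ ({-1, 0, 1} : Set ℝ)) (hlam₁ : lam₁ ∈ weylOrbit R ϖ₁) :
    ∀ lam₂ ∈ weylOrbit R ϖ₂,
      ∃ d : ℕ, (d : ℝ) = ⟪ϖ₁, ϖ₂⟫ - ⟪lam₁, lam₂⟫ ∧ HasOrthogonalSeparators R lam₁ lam₂ d := by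
  induction hlam₁ with
  | refl =>
    intro lam₂ hlam₂
    obtain ⟨S, hS⟩ := exists_isOrthogonalDecomposition hlen hneg hrefl hmin₂ hlam₂
    exact hS.exists_hasOrthogonalSeparators hpos hlen hdom₁ hdom₂ hmin₁
  | tail _ hstep ih =>
    obtain ⟨α, hα, rfl⟩ := hstep
    intro lam₂ hlam₂
    obtain ⟨d, hd, hsep⟩ := ih _ (rootReflection_mem_weylOrbit hlam₂ hα)
    refine ⟨d, by rw [hd, inner_rootReflection_comm], ?_⟩
    simpa only [rootReflection_involutive (hlen α hα) lam₂] using hsep.reflect hlen hrefl hα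

/-- Let `R` be a simply laced root system, `ϖ₁, ϖ₂` minuscule weights,
`λᵢ ∈ W·ϖᵢ`, and set `d = d(λ₁,λ₂) = (ϖ₁,ϖ₂) - (λ₁,λ₂)` (a non-negative integer).  Then
there exists a sequence of roots `γ₁, …, γ_d` which are pairwise orthogonal and satisfy
`(λ₁,γᵢ)(λ₂,γᵢ) < 0` for all `i`. -/
theorem statement7 (R Rpos : Set E) (ϖ₁ ϖ₂ lam₁ lam₂ : E)
    (hpos : R = Rpos ∪ (-Rpos))
    (hlen : ∀ α ∈ R, ⟪α, α⟫ = 2)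
    (hneg : ∀ α ∈ R, -α ∈ R)
    (hrefl : ∀ α ∈ R, ∀ β ∈ R, rootReflection α β ∈ R)
    (hdom₁ : ∀ α ∈ Rpos, 0 ≤ ⟪ϖ₁, α⟫) (hdom₂ : ∀ α ∈ Rpos, 0 ≤ ⟪ϖ₂, α⟫)
    (hmin₁ : ∀ α ∈ R, ⟪ϖ₁, α⟫ ∈ ({-1, 0, 1} : Set ℝ))
    (hmin₂ : ∀ α ∈ R, ⟪ϖ₂, α⟫ ∈ ({-1, 0, 1} : Set ℝ))
    (hlam₁ : lam₁ ∈ weylOrbit R ϖ₁) (hlam₂ : lam₂ ∈ weylOrbit R ϖ₂) :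
    ∃ (d : ℕ) (γ : Fin d → E),
      (d : ℝ) = ⟪ϖ₁, ϖ₂⟫ - ⟪lam₁, lam₂⟫ ∧
      (∀ i, γ i ∈ R) ∧
      (∀ i j, i ≠ j → ⟪γ i, γ j⟫ = 0) ∧
      (∀ i, ⟪lam₁, γ i⟫ * ⟪lam₂, γ i⟫ < 0) := by
  obtain ⟨d, hd, γ, hγ⟩ := exists_hasOrthogonalSeparators hpos hlen hneg hrefl hdom₁ hdom₂ hmin₁
    hmin₂ hlam₁ lam₂ hlam₂
  exact ⟨d, γ, hd, hγ⟩
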